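/- For family (A) of new magnetic systems, the functions H = μ₁(x)² Π_x² + μ₂(y) Π_y² + λ₂(y) μ₃(z) Π_z² + b²(μ₄(y) − λ₁(y)²/4), H₁ = μ₁(x)(Π_x + (b/2)λ₁(y)/μ₁(x)), and H₂ = μ₃(z) Π_z² pairwise Poisson-commute in the canonical coordinates (x,y,z,p_x,p_y,p_z), where Π_x = p_x − (b λ₁(y))/(2 μ₁(x)), Π_y = p_y, Π_z = p_z. -/

import Mathlib

noncomputable section

/-- Partial derivative of a function on phase space ℝ⁶ in direction of the `i`-th coordinate. -/
def pd (F : (Fin 6 → ℝ) → ℝ) (i : Fin 6) (v : Fin 6 → ℝ) : ℝ :=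
  fderiv ℝ F v (Pi.single i 1)

/-- Canonical Poisson bracket on ℝ⁶ with coordinates (x,y,z,p_x,p_y,p_z). -/
def pb (F G : (Fin 6 → ℝ) → ℝ) (v : Fin 6 → ℝ) : ℝ :=
  ∑ k : Fin 3, (pd F ⟨k.1, by omega⟩ v * pd G ⟨k.1 + 3, by omega⟩ v -
    pd F ⟨k.1 + 3, by omega⟩ v * pd G ⟨k.1, by omega⟩ v)
lemma pd_eq_deriv {F : (Fin 6 → ℝ) → ℝ} {v : Fin 6 → ℝ} (hF : DifferentiableAt ℝ F v)
    (i : Fin 6) {g : ℝ → ℝ} (hg : ∀ t, F (Function.update v i t) = g t)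
    {d : ℝ} (hd : HasDerivAt g d (v i)) : pd F i v = d := by
  have hc : HasDerivAt (fun t : ℝ => Function.update v i t)
      (Pi.single i 1 : Fin 6 → ℝ) (v i) := by
    have h1 : (fun t : ℝ => Function.update v i t)
        = fun t : ℝ => v + (t - v i) • (Pi.single i 1 : Fin 6 → ℝ) := by
      funext t j
      by_cases h : j = i
      · subst h; simp
      · simp [Function.update_apply, h, Pi.single_apply, Ne.symm h]
    rw [h1]
    simpa using (((hasDerivAt_id (v i)).sub_const (v i)).smul_const
      (Pi.single i 1 : Fin 6 → ℝ)).const_add v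
  have hc' : Function.update v i (v i) = v := Function.update_eq_self i v
  have hF' : HasFDerivAt F (fderiv ℝ F v) (Function.update v i (v i)) := by
    rw [hc']; exact hF.hasFDerivAt
  have h2 : HasDerivAt (fun t => F (Function.update v i t))
      (fderiv ℝ F v (Pi.single i 1)) (v i) := hF'.comp_hasDerivAt (v i) hc
  have h3 : HasDerivAt g (fderiv ℝ F v (Pi.single i 1)) (v i) := by
    have h4 : (fun t => F (Function.update v i t)) = g := funext hg
    rwa [h4] at h2
  exact h3.unique hd

lemma pb_expand (F G : (Fin 6 → ℝ) → ℝ) (v : Fin 6 → ℝ) : pb F G v =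
    pd F 0 v * pd G 3 v - pd F 3 v * pd G 0 v
    + (pd F 1 v * pd G 4 v - pd F 4 v * pd G 1 v)
    + (pd F 2 v * pd G 5 v - pd F 5 v * pd G 2 v) := by
  simp [pb, Fin.sum_univ_three]
  ring

/-- Family (A) of new magnetic systems: with Π_x = p_x − blam₁(y)/(2μ₁(x)), Π_y = p_y,
Π_z = p_z, the functions H, H₁, H₂ pairwise Poisson-commute in the canonical coordinates
(x,y,z,p_x,p_y,p_z) = (v 0,…,v 5). -/
theorem new_magnetic_family_A_involution (b : ℝ)
    (lam₁ lam₂ μ₂ μ₄ μ₁ μ₃ : ℝ → ℝ)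
    (hlam₁ : ContDiff ℝ (⊤ : ℕ∞) lam₁) (hlam₂ : ContDiff ℝ (⊤ : ℕ∞) lam₂)
    (hμ₂ : ContDiff ℝ (⊤ : ℕ∞) μ₂) (hμ₄ : ContDiff ℝ (⊤ : ℕ∞) μ₄)
    (hμ₁ : ContDiff ℝ (⊤ : ℕ∞) μ₁) (hμ₁0 : ∀ x, μ₁ x ≠ 0)
    (hμ₃ : ContDiff ℝ (⊤ : ℕ∞) μ₃)
    (Px : (Fin 6 → ℝ) → ℝ)
    (hPx : Px = fun v => v 3 - b * lam₁ (v 1) / (2 * μ₁ (v 0)))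
    (H H₁ H₂ : (Fin 6 → ℝ) → ℝ)
    (hH : H = fun v => (μ₁ (v 0))^2 * (Px v)^2 + μ₂ (v 1) * (v 4)^2
      + lam₂ (v 1) * μ₃ (v 2) * (v 5)^2 + b^2 * (μ₄ (v 1) - (lam₁ (v 1))^2 / 4))
    (hH₁ : H₁ = fun v => μ₁ (v 0) * (Px v + (b/2) * lam₁ (v 1) / μ₁ (v 0)))
    (hH₂ : H₂ = fun v => μ₃ (v 2) * (v 5)^2) :
    ∀ v : Fin 6 → ℝ,
      pb H H₁ v = 0 ∧ pb H H₂ v = 0 ∧ pb H₁ H₂ v = 0 := by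
  subst hPx
  -- clean forms
  have hHeq : H = fun v => (μ₁ (v 0) * v 3 - b * lam₁ (v 1) / 2)^2 + μ₂ (v 1) * (v 4)^2
      + lam₂ (v 1) * μ₃ (v 2) * (v 5)^2 + b^2 * (μ₄ (v 1) - (lam₁ (v 1))^2 / 4) := by
    rw [hH]; funext w
    have h0 := hμ₁0 (w 0)
    field_simp
  have hH₁eq : H₁ = fun v => μ₁ (v 0) * v 3 := by
    rw [hH₁]; funext w
    have h0 := hμ₁0 (w 0)
    field_simp
    ring
  clear hH hH₁
  subst hHeq hH₁eq hH₂
  have hdμ₁g := hμ₁.differentiable (by simp)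
  have hdμ₂g := hμ₂.differentiable (by simp)
  have hdμ₃g := hμ₃.differentiable (by simp)
  have hdμ₄g := hμ₄.differentiable (by simp)
  have hdl₁g := hlam₁.differentiable (by simp)
  have hdl₂g := hlam₂.differentiable (by simp)
  intro v
  have hdμ₁ : HasDerivAt μ₁ (deriv μ₁ (v 0)) (v 0) := (hdμ₁g (v 0)).hasDerivAt
  have hdμ₃ : HasDerivAt μ₃ (deriv μ₃ (v 2)) (v 2) := (hdμ₃g (v 2)).hasDerivAt
  have hdH : DifferentiableAt ℝ (fun v : Fin 6 → ℝ =>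
      (μ₁ (v 0) * v 3 - b * lam₁ (v 1) / 2)^2 + μ₂ (v 1) * (v 4)^2
      + lam₂ (v 1) * μ₃ (v 2) * (v 5)^2 + b^2 * (μ₄ (v 1) - (lam₁ (v 1))^2 / 4)) v := by
    fun_prop
  have hdH₁ : DifferentiableAt ℝ (fun v : Fin 6 → ℝ => μ₁ (v 0) * v 3) v := by fun_prop
  have hdH₂ : DifferentiableAt ℝ (fun v : Fin 6 → ℝ => μ₃ (v 2) * (v 5)^2) v := by fun_prop
  set A := μ₁ (v 0) * v 3 - b * lam₁ (v 1) / 2 with hA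
  -- pd's of H
  have pH0 : pd (fun v : Fin 6 → ℝ =>
      (μ₁ (v 0) * v 3 - b * lam₁ (v 1) / 2)^2 + μ₂ (v 1) * (v 4)^2
      + lam₂ (v 1) * μ₃ (v 2) * (v 5)^2 + b^2 * (μ₄ (v 1) - (lam₁ (v 1))^2 / 4)) 0 v
      = 2 * A * (deriv μ₁ (v 0) * v 3) := by
    refine pd_eq_deriv hdH 0 (g := fun t => (μ₁ t * v 3 - b * lam₁ (v 1) / 2)^2
      + (μ₂ (v 1) * (v 4)^2 + lam₂ (v 1) * μ₃ (v 2) * (v 5)^2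
        + b^2 * (μ₄ (v 1) - (lam₁ (v 1))^2 / 4)))
      (fun t => by simp [Function.update_apply]; ring) ?_
    have h := (((hdμ₁.mul_const (v 3)).sub_const (b * lam₁ (v 1) / 2)).pow 2).add_const
      (μ₂ (v 1) * (v 4)^2 + lam₂ (v 1) * μ₃ (v 2) * (v 5)^2
        + b^2 * (μ₄ (v 1) - (lam₁ (v 1))^2 / 4))
    refine h.congr_deriv ?_
    rw [hA]; ring
  have pH3 : pd (fun v : Fin 6 → ℝ =>
      (μ₁ (v 0) * v 3 - b * lam₁ (v 1) / 2)^2 + μ₂ (v 1) * (v 4)^2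
      + lam₂ (v 1) * μ₃ (v 2) * (v 5)^2 + b^2 * (μ₄ (v 1) - (lam₁ (v 1))^2 / 4)) 3 v
      = 2 * A * μ₁ (v 0) := by
    refine pd_eq_deriv hdH 3 (g := fun t => (μ₁ (v 0) * t - b * lam₁ (v 1) / 2)^2
      + (μ₂ (v 1) * (v 4)^2 + lam₂ (v 1) * μ₃ (v 2) * (v 5)^2
        + b^2 * (μ₄ (v 1) - (lam₁ (v 1))^2 / 4)))
      (fun t => by simp [Function.update_apply]; ring) ?_
    have h := ((((hasDerivAt_id (v 3)).const_mul (μ₁ (v 0))).sub_const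
      (b * lam₁ (v 1) / 2)).pow 2).add_const
      (μ₂ (v 1) * (v 4)^2 + lam₂ (v 1) * μ₃ (v 2) * (v 5)^2
        + b^2 * (μ₄ (v 1) - (lam₁ (v 1))^2 / 4))
    refine h.congr_deriv ?_
    simp only [id_eq]; rw [hA]; ring
  have pH2 : pd (fun v : Fin 6 → ℝ =>
      (μ₁ (v 0) * v 3 - b * lam₁ (v 1) / 2)^2 + μ₂ (v 1) * (v 4)^2
      + lam₂ (v 1) * μ₃ (v 2) * (v 5)^2 + b^2 * (μ₄ (v 1) - (lam₁ (v 1))^2 / 4)) 2 v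
      = lam₂ (v 1) * deriv μ₃ (v 2) * (v 5)^2 := by
    refine pd_eq_deriv hdH 2 (g := fun t => (lam₂ (v 1) * μ₃ t * (v 5)^2)
      + ((μ₁ (v 0) * v 3 - b * lam₁ (v 1) / 2)^2 + μ₂ (v 1) * (v 4)^2
        + b^2 * (μ₄ (v 1) - (lam₁ (v 1))^2 / 4)))
      (fun t => by simp [Function.update_apply]; ring) ?_
    have h := (((hdμ₃.const_mul (lam₂ (v 1))).mul_const ((v 5)^2)).add_const
      ((μ₁ (v 0) * v 3 - b * lam₁ (v 1) / 2)^2 + μ₂ (v 1) * (v 4)^2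
        + b^2 * (μ₄ (v 1) - (lam₁ (v 1))^2 / 4)))
    convert h using 1
  have pH5 : pd (fun v : Fin 6 → ℝ =>
      (μ₁ (v 0) * v 3 - b * lam₁ (v 1) / 2)^2 + μ₂ (v 1) * (v 4)^2
      + lam₂ (v 1) * μ₃ (v 2) * (v 5)^2 + b^2 * (μ₄ (v 1) - (lam₁ (v 1))^2 / 4)) 5 v
      = lam₂ (v 1) * μ₃ (v 2) * (2 * v 5) := by
    refine pd_eq_deriv hdH 5 (g := fun t => (lam₂ (v 1) * μ₃ (v 2) * t^2)
      + ((μ₁ (v 0) * v 3 - b * lam₁ (v 1) / 2)^2 + μ₂ (v 1) * (v 4)^2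
        + b^2 * (μ₄ (v 1) - (lam₁ (v 1))^2 / 4)))
      (fun t => by simp [Function.update_apply]; ring) ?_
    have h := (((hasDerivAt_pow 2 (v 5)).const_mul (lam₂ (v 1) * μ₃ (v 2))).add_const
      ((μ₁ (v 0) * v 3 - b * lam₁ (v 1) / 2)^2 + μ₂ (v 1) * (v 4)^2
        + b^2 * (μ₄ (v 1) - (lam₁ (v 1))^2 / 4)))
    refine h.congr_deriv ?_
    norm_num
  -- pd's of H₁
  have pH₁0 : pd (fun v : Fin 6 → ℝ => μ₁ (v 0) * v 3) 0 v = deriv μ₁ (v 0) * v 3 :=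
    pd_eq_deriv hdH₁ 0 (g := fun t => μ₁ t * v 3)
      (fun t => by simp [Function.update_apply]) (hdμ₁.mul_const (v 3))
  have pH₁3 : pd (fun v : Fin 6 → ℝ => μ₁ (v 0) * v 3) 3 v = μ₁ (v 0) := by
    refine pd_eq_deriv hdH₁ 3 (g := fun t => μ₁ (v 0) * t)
      (fun t => by simp [Function.update_apply]) ?_
    simpa using (hasDerivAt_id (v 3)).const_mul (μ₁ (v 0))
  have pH₁1 : pd (fun v : Fin 6 → ℝ => μ₁ (v 0) * v 3) 1 v = 0 :=
    pd_eq_deriv hdH₁ 1 (g := fun _ => μ₁ (v 0) * v 3)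
      (fun t => by simp [Function.update_apply]) (hasDerivAt_const _ _)
  have pH₁2 : pd (fun v : Fin 6 → ℝ => μ₁ (v 0) * v 3) 2 v = 0 :=
    pd_eq_deriv hdH₁ 2 (g := fun _ => μ₁ (v 0) * v 3)
      (fun t => by simp [Function.update_apply]) (hasDerivAt_const _ _)
  have pH₁4 : pd (fun v : Fin 6 → ℝ => μ₁ (v 0) * v 3) 4 v = 0 :=
    pd_eq_deriv hdH₁ 4 (g := fun _ => μ₁ (v 0) * v 3)
      (fun t => by simp [Function.update_apply]) (hasDerivAt_const _ _)
  have pH₁5 : pd (fun v : Fin 6 → ℝ => μ₁ (v 0) * v 3) 5 v = 0 :=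
    pd_eq_deriv hdH₁ 5 (g := fun _ => μ₁ (v 0) * v 3)
      (fun t => by simp [Function.update_apply]) (hasDerivAt_const _ _)
  -- pd's of H₂
  have pH₂2 : pd (fun v : Fin 6 → ℝ => μ₃ (v 2) * (v 5)^2) 2 v
      = deriv μ₃ (v 2) * (v 5)^2 :=
    pd_eq_deriv hdH₂ 2 (g := fun t => μ₃ t * (v 5)^2)
      (fun t => by simp [Function.update_apply]) (hdμ₃.mul_const ((v 5)^2))
  have pH₂5 : pd (fun v : Fin 6 → ℝ => μ₃ (v 2) * (v 5)^2) 5 v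
      = μ₃ (v 2) * (2 * v 5) := by
    refine pd_eq_deriv hdH₂ 5 (g := fun t => μ₃ (v 2) * t^2)
      (fun t => by simp [Function.update_apply]) ?_
    have h := (hasDerivAt_pow 2 (v 5)).const_mul (μ₃ (v 2))
    refine h.congr_deriv ?_
    norm_num
  have pH₂0 : pd (fun v : Fin 6 → ℝ => μ₃ (v 2) * (v 5)^2) 0 v = 0 :=
    pd_eq_deriv hdH₂ 0 (g := fun _ => μ₃ (v 2) * (v 5)^2)
      (fun t => by simp [Function.update_apply]) (hasDerivAt_const _ _)
  have pH₂1 : pd (fun v : Fin 6 → ℝ => μ₃ (v 2) * (v 5)^2) 1 v = 0 :=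
    pd_eq_deriv hdH₂ 1 (g := fun _ => μ₃ (v 2) * (v 5)^2)
      (fun t => by simp [Function.update_apply]) (hasDerivAt_const _ _)
  have pH₂3 : pd (fun v : Fin 6 → ℝ => μ₃ (v 2) * (v 5)^2) 3 v = 0 :=
    pd_eq_deriv hdH₂ 3 (g := fun _ => μ₃ (v 2) * (v 5)^2)
      (fun t => by simp [Function.update_apply]) (hasDerivAt_const _ _)
  have pH₂4 : pd (fun v : Fin 6 → ℝ => μ₃ (v 2) * (v 5)^2) 4 v = 0 :=
    pd_eq_deriv hdH₂ 4 (g := fun _ => μ₃ (v 2) * (v 5)^2)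
      (fun t => by simp [Function.update_apply]) (hasDerivAt_const _ _)
  refine ⟨?_, ?_, ?_⟩
  · rw [pb_expand, pH0, pH3, pH₁0, pH₁3, pH₁1, pH₁2, pH₁4, pH₁5]
    ring
  · rw [pb_expand, pH2, pH5, pH₂2, pH₂5, pH₂0, pH₂1, pH₂3, pH₂4]
    ring
  · rw [pb_expand, pH₁0, pH₁3, pH₁1, pH₁2, pH₁4, pH₁5, pH₂2, pH₂5, pH₂0, pH₂1, pH₂3, pH₂4]
    ring
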